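/- arXiv:2306.00798 — 5 statements merged into one kernel-verified Lean document; each statement's English description precedes it below -/
import Mathlib

section
/- Let H_SE and H_C be finite-dimensional Hilbert spaces, U a unitary on H_SE ⊗ H_C, ρ_SE a density operator on H_SE, and ω_C a density operator on H_C. If U (ρ_SE ⊗ ω_C) U† = σ_SE ⊗ ω_C for some density operator σ_SE on H_SE, then there exists a unitary V on H_SE with σ_SE = V ρ_SE V†. -/
/-!
Conjugation by a unitary preserves the traces of all powers, and
`tr ((X ⊗ Y) ^ k) = tr (X ^ k) * tr (Y ^ k)`, so `tr (ρ ^ k) * tr (ω ^ k) = tr (σ ^ k) * tr (ω ^ k)`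
for every `k`. As `ω` is positive semidefinite of trace one, `tr (ω ^ k) > 0` cancels. Thus the
eigenvalues of the Hermitian matrices `ρ` and `σ` have the same power sums; in characteristic zero
power sums determine a multiset (evaluate Lagrange polynomials at the points), so `ρ` and `σ` have
the same characteristic polynomial, hence the same sorted eigenvalues, and composing their
diagonalizing unitaries gives `V`.
-/

open Matrix Kronecker
open scoped ComplexOrder

/-- A density operator: positive semidefinite with unit trace. -/
def IsDensity {ι : Type*} [Fintype ι] (A : Matrix ι ι ℂ) : Prop :=
  A.PosSemidef ∧ A.trace = 1

namespace Multiset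

open Polynomial

variable {K : Type*} [Field K]

theorem sum_map_eval_eq_of_sum_map_pow_eq {s t : Multiset K}
    (h : ∀ k : ℕ, (s.map (· ^ k)).sum = (t.map (· ^ k)).sum) (p : K[X]) :
    (s.map p.eval).sum = (t.map p.eval).sum := by
  induction p using Polynomial.induction_on' with
  | add p q hp hq => simp only [eval_add, sum_map_add, hp, hq]
  | monomial k a => simp only [eval_monomial, sum_map_mul_left, h k]

theorem eq_of_sum_map_pow_eq [CharZero K] {s t : Multiset K}
    (h : ∀ k : ℕ, (s.map (· ^ k)).sum = (t.map (· ^ k)).sum) : s = t := by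
  classical
  ext a
  set A := insert a (s + t).toFinset
  -- the Lagrange polynomial of `a` on the nodes `A` counts occurrences of `a`
  have sum_map_basis : ∀ u ≤ s + t, (u.map (Lagrange.basis A id a).eval).sum = u.count a := by
    intro u hu
    have eval_self : (Lagrange.basis A id a).eval a = 1 :=
      Lagrange.eval_basis_self (v := id) (Set.injOn_id _) (Finset.mem_insert_self a _)
    rw [sum_map_eq_nsmul_single a, eval_self, nsmul_one]
    intro x hxa hx
    exact Lagrange.eval_basis_of_ne (v := id) hxa.symm
      (Finset.mem_insert_of_mem (mem_toFinset.2 (mem_of_le hu hx)))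
  exact_mod_cast (sum_map_basis s (le_add_right s t)).symm.trans
    ((sum_map_eval_eq_of_sum_map_pow_eq h _).trans (sum_map_basis t (le_add_left t s)))

end Multiset

namespace Matrix

variable {n : Type*} [Fintype n] [DecidableEq n]

theorem kronecker_pow {R m : Type*} [CommSemiring R] [Fintype m] [DecidableEq m]
    (A : Matrix n n R) (B : Matrix m m R) (k : ℕ) : (A ⊗ₖ B) ^ k = (A ^ k) ⊗ₖ (B ^ k) := by
  induction k with
  | zero => simp only [pow_zero, one_kronecker_one]
  | succ k ih => rw [pow_succ, ih, ← mul_kronecker_mul, ← pow_succ, ← pow_succ]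

theorem trace_pow_conj_unitary {R : Type*} [CommRing R] [StarRing R] {U : Matrix n n R}
    (hU : U ∈ unitaryGroup n R) (X : Matrix n n R) (k : ℕ) :
    ((U * X * Uᴴ) ^ k).trace = (X ^ k).trace := by
  have conj_pow := map_pow (Unitary.conjStarAlgAut R _ ⟨U, hU⟩) X k
  simp only [Unitary.conjStarAlgAut_apply, star_eq_conjTranspose] at conj_pow
  rw [← conj_pow, trace_mul_cycle, ← star_eq_conjTranspose, (mem_unitaryGroup_iff').1 hU, one_mul]

variable {𝕜 : Type*} [RCLike 𝕜] {A B : Matrix n n 𝕜}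

theorem IsHermitian.trace_pow (hA : A.IsHermitian) (k : ℕ) :
    (A ^ k).trace = ∑ i, (hA.eigenvalues i : 𝕜) ^ k := by
  conv_lhs => rw [hA.spectral_theorem, ← map_pow, Unitary.conjStarAlgAut_apply, trace_mul_cycle,
    Unitary.coe_star_mul_self, one_mul, diagonal_pow, trace_diagonal]
  simp

theorem PosSemidef.trace_pow_ne_zero (hA : A.PosSemidef) (h : A.trace ≠ 0) (k : ℕ) :
    (A ^ k).trace ≠ 0 := by
  obtain ⟨i, hi⟩ : ∃ i, hA.1.eigenvalues i ≠ 0 := by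
    by_contra! h0
    exact h (by simp [hA.1.trace_eq_sum_eigenvalues, h0])
  have sum_pos : 0 < ∑ j, hA.1.eigenvalues j ^ k :=
    Finset.sum_pos' (fun j _ ↦ pow_nonneg (hA.eigenvalues_nonneg j) k)
      ⟨i, Finset.mem_univ i, pow_pos ((hA.eigenvalues_nonneg i).lt_of_ne' hi) k⟩
  rw [hA.1.trace_pow]
  exact_mod_cast sum_pos.ne'

theorem IsHermitian.eigenvalues_eq_of_trace_pow_eq (hA : A.IsHermitian) (hB : B.IsHermitian)
    (h : ∀ k : ℕ, (A ^ k).trace = (B ^ k).trace) : hA.eigenvalues = hB.eigenvalues := by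
  have roots_eq : A.charpoly.roots = B.charpoly.roots := by
    refine Multiset.eq_of_sum_map_pow_eq fun k ↦ ?_
    simpa [hA.roots_charpoly_eq_eigenvalues, hB.roots_charpoly_eq_eigenvalues, hA.trace_pow,
      hB.trace_pow] using h k
  rw [hA.eigenvalues_eq_eigenvalues_iff hB,
    hA.splits_charpoly.eq_prod_roots_of_monic (charpoly_monic A),
    hB.splits_charpoly.eq_prod_roots_of_monic (charpoly_monic B), roots_eq]

theorem IsHermitian.exists_unitary_conj_eq_of_eigenvalues_eq (hA : A.IsHermitian)
    (hB : B.IsHermitian) (h : hA.eigenvalues = hB.eigenvalues) :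
    ∃ V ∈ unitaryGroup n 𝕜, B = V * A * Vᴴ := by
  refine ⟨↑(hB.eigenvectorUnitary * star hA.eigenvectorUnitary), SetLike.coe_mem _, ?_⟩
  have diagonalize := hB.spectral_theorem
  rwa [← h, ← hA.conjStarAlgAut_star_eigenvectorUnitary, ← Unitary.conjStarAlgAut_mul_apply,
    Unitary.conjStarAlgAut_apply, star_eq_conjTranspose] at diagonalize

end Matrix

/-- **Basic lemma of catalysis.** If a unitary on `H_SE ⊗ H_C` maps `ρ_SE ⊗ ω_C` to
`σ_SE ⊗ ω_C`, then `σ_SE` is unitarily equivalent to `ρ_SE`. -/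
theorem catalysis_basic_lemma {n m : ℕ}
    (U : Matrix (Fin n × Fin m) (Fin n × Fin m) ℂ)
    (hU : U ∈ Matrix.unitaryGroup (Fin n × Fin m) ℂ)
    (ρSE σSE : Matrix (Fin n) (Fin n) ℂ) (ωC : Matrix (Fin m) (Fin m) ℂ)
    (hρ : IsDensity ρSE) (hσ : IsDensity σSE) (hω : IsDensity ωC)
    (h : U * (ρSE ⊗ₖ ωC) * Uᴴ = σSE ⊗ₖ ωC) :
    ∃ V : Matrix (Fin n) (Fin n) ℂ,
      V ∈ Matrix.unitaryGroup (Fin n) ℂ ∧ σSE = V * ρSE * Vᴴ := by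
  have trace_pow_ω_ne_zero := hω.1.trace_pow_ne_zero (by simp [hω.2])
  have trace_pow_eq (k : ℕ) : (ρSE ^ k).trace = (σSE ^ k).trace := by
    have := trace_pow_conj_unitary hU (ρSE ⊗ₖ ωC) k
    rw [h, kronecker_pow, kronecker_pow, trace_kronecker, trace_kronecker] at this
    exact (mul_right_cancel₀ (trace_pow_ω_ne_zero k) this).symm
  exact hρ.1.1.exists_unitary_conj_eq_of_eigenvalues_eq hσ.1.1
    (hρ.1.1.eigenvalues_eq_of_trace_pow_eq hσ.1.1 trace_pow_eq)
end

section
/- Let p and q be probability vectors in ℝ^d with p majorizing q, and let r be any probability vector in ℝ^m. Then p ⊗ r majorizes q ⊗ r, where ⊗ denotes the Kronecker (tensor) product of vectors. -/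
/-!
Split a set `s` of pairs `(i, j)` into its columns `s_j = {i | (i, j) ∈ s}`. Since `p ≻ q`, each
`s_j` is matched by a set `t_j` of the same size with `∑_{s_j} q ≤ ∑_{t_j} p`; multiplying by
`r_j ≥ 0` and reassembling the columns `t_j` gives a set of the same size as `s` whose
`p ⊗ r`-mass dominates the `q ⊗ r`-mass of `s`.
-/

/-- `p` majorizes `q`: for every `k`, the sum of the `k` largest entries of `p`
is at least the sum of the `k` largest entries of `q` (expressed via subsets),
and the total sums agree. -/
def Majorizes {α β : Type*} [Fintype α] [Fintype β] (p : α → ℝ) (q : β → ℝ) : Prop :=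
  (∀ s : Finset β, ∃ t : Finset α, t.card = s.card ∧ ∑ i ∈ s, q i ≤ ∑ i ∈ t, p i) ∧
  ∑ i, p i = ∑ i, q i

open Finset

namespace Finset

variable {α β M : Type*}

noncomputable def column (s : Finset (α × β)) (j : β) : Finset α :=
  s.preimage (·, j) (Prod.mk_left_injective j).injOn

@[simp]
theorem mem_column {s : Finset (α × β)} {j : β} {i : α} : i ∈ s.column j ↔ (i, j) ∈ s :=
  mem_preimage

theorem sum_eq_sum_sum_column [Fintype β] [AddCommMonoid M] (s : Finset (α × β))
    (f : α × β → M) : ∑ x ∈ s, f x = ∑ j, ∑ i ∈ s.column j, f (i, j) :=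
  sum_finset_product_right s univ _ (by simp)

theorem card_eq_sum_card_column [Fintype β] (s : Finset (α × β)) :
    #s = ∑ j, #(s.column j) := by
  simp only [card_eq_sum_ones]
  exact s.sum_eq_sum_sum_column _

end Finset

theorem Majorizes.tensor_right {α α' β : Type*} [Fintype α] [Fintype α'] [Fintype β]
    {p : α → ℝ} {q : α' → ℝ} {r : β → ℝ} (h : Majorizes p q) (hr : ∀ j, 0 ≤ r j) :
    Majorizes (fun x : α × β => p x.1 * r x.2) (fun x : α' × β => q x.1 * r x.2) := by
  classical
  refine ⟨fun s => ?_, ?_⟩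
  · choose t ht hle using fun j => h.1 (s.column j)
    set T : Finset (α × β) := univ.filter fun x => x.1 ∈ t x.2
    have hT : ∀ j, T.column j = t j := fun j => by ext; simp [T]
    refine ⟨T, ?_, ?_⟩
    · simp only [card_eq_sum_card_column, hT, ht]
    · calc ∑ x ∈ s, q x.1 * r x.2 = ∑ j, (∑ i ∈ s.column j, q i) * r j := by
            simp only [sum_eq_sum_sum_column s, sum_mul]
        _ ≤ ∑ j, (∑ i ∈ t j, p i) * r j :=
            sum_le_sum fun j _ => mul_le_mul_of_nonneg_right (hle j) (hr j)
        _ = ∑ x ∈ T, p x.1 * r x.2 := by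
            simp only [sum_eq_sum_sum_column T, hT, sum_mul]
  · simp only [Fintype.sum_prod_type_right, ← sum_mul, h.2]

theorem majorization_tensor_stable_general {d m : ℕ} (p q : Fin d → ℝ) (r : Fin m → ℝ)
    (hr : (∀ j, 0 ≤ r j) ∧ ∑ j, r j = 1)
    (hmaj : Majorizes p q) :
    Majorizes (fun x : Fin d × Fin m => p x.1 * r x.2)
      (fun x : Fin d × Fin m => q x.1 * r x.2) :=
  hmaj.tensor_right hr.1

/-- Majorization is stable under tensoring with a fixed probability vector:
if `p ≻ q` then `p ⊗ r ≻ q ⊗ r`. -/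
theorem majorization_tensor_stable {d m : ℕ} (p q : Fin d → ℝ) (r : Fin m → ℝ)
    (hp : (∀ i, 0 ≤ p i) ∧ ∑ i, p i = 1)
    (hq : (∀ i, 0 ≤ q i) ∧ ∑ i, q i = 1)
    (hr : (∀ j, 0 ≤ r j) ∧ ∑ j, r j = 1)
    (hmaj : Majorizes p q) :
    Majorizes (fun x : Fin d × Fin m => p x.1 * r x.2)
      (fun x : Fin d × Fin m => q x.1 * r x.2) :=
  majorization_tensor_stable_general p q r hr hmaj
end

section
/- Let p ∈ ℝ^d, q ∈ ℝ^e, and r ∈ ℝ^m be probability vectors with strictly positive entries. If the descending rearrangement of p ⊗ r equals the descending rearrangement of q ⊗ r (as multisets of entries, including multiplicities, and d·m = e·m), then the descending rearrangements of p and q coincide as multisets. In particular, a pure bipartite LOSR conversion that is impossible without a catalyst remains impossible with any pure-state strict catalyst. -/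
/-!
The largest entry of `p ⊗ r` is `max p * max r`, so `max p = max q`. Removing one copy of this
entry from `p` and from `q` removes the same block `max p • r` from both tensor products, and
induction on the number of entries finishes the argument.
-/

namespace Multiset

theorem exists_max_of_mem {α : Type*} [LinearOrder α] {P : Multiset α} {x : α} (hx : x ∈ P) :
    ∃ a ∈ P, ∀ y ∈ P, y ≤ a :=
  Set.exists_max_image {y | y ∈ P} id P.finite_toSet ⟨x, hx⟩

theorem map_mul_cons_product {α : Type*} [Mul α] (a : α) (P R : Multiset α) :
    ((a ::ₘ P) ×ˢ R).map (fun x => x.1 * x.2)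
      = R.map (a * ·) + (P ×ˢ R).map (fun x => x.1 * x.2) := by
  simp only [cons_product, map_add, map_map, Function.comp_def]

section OrderedSemiring

variable {α : Type*} [CommSemiring α] [LinearOrder α] [IsStrictOrderedRing α]

theorem le_mul_of_mem_map_mul_product {P R : Multiset α} {a c x : α}
    (hPa : ∀ y ∈ P, y ≤ a) (ha : 0 ≤ a) (hRc : ∀ z ∈ R, z ≤ c) (hR : ∀ z ∈ R, 0 ≤ z)
    (hx : x ∈ (P ×ˢ R).map (fun x => x.1 * x.2)) : x ≤ a * c := by
  obtain ⟨⟨y, z⟩, hyz, rfl⟩ := mem_map.1 hx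
  rw [mem_product] at hyz
  exact mul_le_mul (hPa y hyz.1) (hRc z hyz.2) (hR z hyz.2) ha

theorem le_of_map_mul_product_eq {P Q R : Multiset α} {a b c : α}
    (h : (P ×ˢ R).map (fun x => x.1 * x.2) = (Q ×ˢ R).map (fun x => x.1 * x.2))
    (ha : a ∈ P) (hQb : ∀ y ∈ Q, y ≤ b) (hb : 0 ≤ b)
    (hc : c ∈ R) (hRc : ∀ z ∈ R, z ≤ c) (hR : ∀ z ∈ R, 0 < z) : a ≤ b := by
  have hac : a * c ∈ (Q ×ˢ R).map (fun x => x.1 * x.2) := by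
    rw [← h]
    exact mem_map_of_mem (fun x : α × α => x.1 * x.2) ((mem_product (p := (a, c))).2 ⟨ha, hc⟩)
  exact le_of_mul_le_mul_right
    (le_mul_of_mem_map_mul_product hQb hb hRc (fun z hz => (hR z hz).le) hac) (hR c hc)

theorem eq_of_map_mul_product_eq {P Q R : Multiset α}
    (hP : ∀ x ∈ P, 0 ≤ x) (hQ : ∀ x ∈ Q, 0 ≤ x) (hR : ∀ z ∈ R, 0 < z) (hR0 : R ≠ 0)
    (h : (P ×ˢ R).map (fun x => x.1 * x.2) = (Q ×ˢ R).map (fun x => x.1 * x.2)) : P = Q := by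
  have hcard : card P = card Q := by
    have := congrArg card h
    simp only [card_map, card_product] at this
    exact Nat.eq_of_mul_eq_mul_right (card_pos.2 hR0) this
  rcases P.empty_or_exists_mem with rfl | ⟨x, hx⟩
  · exact (card_eq_zero.1 (hcard.symm.trans card_zero)).symm
  obtain ⟨y, hy⟩ := card_pos_iff_exists_mem.1 (hcard ▸ card_pos_iff_exists_mem.2 ⟨x, hx⟩)
  obtain ⟨a, haP, hPa⟩ := exists_max_of_mem hx
  obtain ⟨b, hbQ, hQb⟩ := exists_max_of_mem hy
  obtain ⟨z, hz⟩ := exists_mem_of_ne_zero hR0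
  obtain ⟨c, hcR, hRc⟩ := exists_max_of_mem hz
  have hab : a = b := le_antisymm
    (le_of_map_mul_product_eq h haP hQb (hQ b hbQ) hcR hRc hR)
    (le_of_map_mul_product_eq h.symm hbQ hPa (hP a haP) hcR hRc hR)
  subst hab
  rw [← cons_erase haP, ← cons_erase hbQ, map_mul_cons_product, map_mul_cons_product] at h
  rw [← cons_erase haP, ← cons_erase hbQ,
    eq_of_map_mul_product_eq (fun x hx => hP x (mem_of_mem_erase hx))
      (fun x hx => hQ x (mem_of_mem_erase hx)) hR hR0 (add_left_cancel h)]
termination_by card P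
decreasing_by exact card_erase_lt_of_mem haP

end OrderedSemiring

end Multiset

theorem Finset.univ_val_map_mul_eq_map_product {α ι κ : Type*} [Mul α] [Fintype ι] [Fintype κ]
    (f : ι → α) (g : κ → α) :
    univ.val.map (fun x : ι × κ => f x.1 * g x.2)
      = (univ.val.map f ×ˢ univ.val.map g).map (fun x => x.1 * x.2) := by
  rw [← univ_product_univ, product_val]
  simp [SProd.sprod, Multiset.product, Multiset.map_bind, Multiset.bind_map, Multiset.map_map]

/-- Cancellation of tensor factors: if the multisets of entries of `p ⊗ r` and
`q ⊗ r` coincide (for strictly positive probability vectors), then the multisets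
of entries of `p` and `q` coincide.  In particular a pure bipartite LOSR
conversion that is impossible without a catalyst remains impossible with any
pure-state strict catalyst. -/
theorem tensor_cancellation {d e m : ℕ} (p : Fin d → ℝ) (q : Fin e → ℝ) (r : Fin m → ℝ)
    (hp : (∀ i, 0 < p i) ∧ ∑ i, p i = 1)
    (hq : (∀ i, 0 < q i) ∧ ∑ i, q i = 1)
    (hr : (∀ j, 0 < r j) ∧ ∑ j, r j = 1)
    (h : Finset.univ.val.map (fun x : Fin d × Fin m => p x.1 * r x.2)
       = Finset.univ.val.map (fun x : Fin e × Fin m => q x.1 * r x.2)) :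
    Finset.univ.val.map p = Finset.univ.val.map q := by
  have hr0 : Finset.univ.val.map r ≠ 0 := fun h0 => by
    simp [Finset.sum_eq_multiset_sum, h0] at hr
  rw [Finset.univ_val_map_mul_eq_map_product, Finset.univ_val_map_mul_eq_map_product] at h
  refine Multiset.eq_of_map_mul_product_eq ?_ ?_ ?_ hr0 h <;>
    simp only [Multiset.forall_mem_map_iff, Finset.mem_val, Finset.mem_univ, true_implies]
  exacts [fun i => (hp.1 i).le, fun i => (hq.1 i).le, hr.1]
end

section
/- Let ρ and σ be density operators on H, let ω = (1/(n-1)) Σ_{k=1}^{n-1} ρ^{⊗k} ⊗ σ^{⊗(n-k)} on H^{⊗n}, and let U_π be the unitary on H ⊗ H^{⊗n} implementing the cyclic permutation of the n+1 tensor factors sending position i to position i+1 (mod n+1). Then U_π (ρ ⊗ ω) U_π† = σ ⊗ ω', where ω' = (1/(n-1)) Σ_{k=2}^{n} ρ^{⊗k} ⊗ σ^{⊗(n-k)}. -/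
open Matrix
open scoped ComplexOrder

/-- `ρ^{⊗k} ⊗ σ^{⊗(n-k)}` on `H^{⊗n}`: the first `k` tensor factors are `ρ`
and the remaining `n-k` factors are `σ`. -/
noncomputable def tensorMix {d : ℕ} (ρ σ : Matrix (Fin d) (Fin d) ℂ) (n k : ℕ) :
    Matrix (Fin n → Fin d) (Fin n → Fin d) ℂ :=
  fun x y => ∏ i : Fin n, if (i : ℕ) < k then ρ (x i) (y i) else σ (x i) (y i)

/-- The permutation unitary on `H^{⊗n}` sending tensor factor `i` to
position `e i`. -/
def permUnitary {d n : ℕ} (e : Equiv.Perm (Fin n)) :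
    Matrix (Fin n → Fin d) (Fin n → Fin d) ℂ :=
  fun x y => if (fun i => x (e i)) = y then 1 else 0

/-- `A ⊗ B` on `H ⊗ H^{⊗n}`, with `A` placed in the 0-th tensor factor. -/
def tensorHead {d n : ℕ} (A : Matrix (Fin d) (Fin d) ℂ)
    (B : Matrix (Fin n → Fin d) (Fin n → Fin d) ℂ) :
    Matrix (Fin (n + 1) → Fin d) (Fin (n + 1) → Fin d) ℂ :=
  fun x y => A (x 0) (y 0) * B (fun i => x i.succ) (fun i => y i.succ)

lemma conj_perm {d n : ℕ} (e : Equiv.Perm (Fin n))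
    (A : Matrix (Fin n → Fin d) (Fin n → Fin d) ℂ) (x y : Fin n → Fin d) :
    ((permUnitary e * A * (permUnitary e)ᴴ :
        Matrix (Fin n → Fin d) (Fin n → Fin d) ℂ)) x y
      = A (fun i => x (e i)) (fun i => y (e i)) := by
  simp [Matrix.mul_apply, permUnitary, Matrix.conjTranspose_apply, apply_ite,
    ite_mul, mul_ite, Finset.sum_ite_eq]

lemma key {d n : ℕ} (ρ σ : Matrix (Fin d) (Fin d) ℂ) (k : ℕ) (hk1 : 1 ≤ k)
    (hk2 : k ≤ n - 1) (hn : 2 ≤ n) (x y : Fin (n+1) → Fin d) :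
    tensorHead ρ (tensorMix ρ σ n k)
        (fun i => x (finRotate (n+1) i)) (fun i => y (finRotate (n+1) i))
      = tensorHead σ (tensorMix ρ σ n (k+1)) x y := by
  have hn1 : n ≥ 2 := hn
  set e := finRotate (n+1) with he
  have hval : ∀ j : Fin (n+1), (e j : ℕ) = if (j:ℕ) = n then 0 else (j:ℕ) + 1 := by
    intro j
    rw [he, finRotate_succ_apply, Fin.val_add_one]
    by_cases h : j = Fin.last n
    · simp [h, Fin.val_last]
    · have : (j : ℕ) ≠ n := fun hh => h (Fin.ext (by simpa using hh))
      simp [h, this]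
  set T : Fin (n+1) → ℂ := fun j =>
    if 1 ≤ (j : ℕ) ∧ (j : ℕ) ≤ k + 1 then ρ (x j) (y j) else σ (x j) (y j) with hT
  have hL : tensorHead ρ (tensorMix ρ σ n k)
      (fun i => x (e i)) (fun i => y (e i)) = ∏ j : Fin (n+1), T (e j) := by
    rw [Fin.prod_univ_succ]
    simp only [tensorHead, tensorMix, hT]
    congr 1
    · have h0 : (e (0 : Fin (n+1)) : ℕ) = 1 := by rw [hval]; simp; omega
      rw [h0, if_pos ⟨le_rfl, by omega⟩]
    · refine Finset.prod_congr rfl fun i _ => ?_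
      have hi := i.isLt
      have hv : (e i.succ : ℕ) = if (i : ℕ) + 1 = n then 0 else (i : ℕ) + 2 := by
        rw [hval, Fin.val_succ]
      rw [hv]
      by_cases hc : (i : ℕ) + 1 = n
      · rw [if_pos hc, if_neg (show ¬ ((i:ℕ) < k) by omega), if_neg (by omega)]
      · rw [if_neg hc]
        by_cases hik : (i : ℕ) < k
        · rw [if_pos hik, if_pos ⟨by omega, by omega⟩]
        · rw [if_neg hik, if_neg (by omega)]
  have hR : tensorHead σ (tensorMix ρ σ n (k+1)) x y = ∏ j : Fin (n+1), T j := by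
    rw [Fin.prod_univ_succ]
    simp only [tensorHead, tensorMix, hT]
    congr 1
    refine Finset.prod_congr rfl fun i _ => ?_
    rw [Fin.val_succ]
    by_cases hik : (i : ℕ) < k + 1
    · rw [if_pos hik, if_pos ⟨by omega, by omega⟩]
    · rw [if_neg hik, if_neg (by omega)]
  rw [hL, hR, Equiv.prod_comp e T]

/-- Conjugating `ρ ⊗ ω` by the cyclic permutation of the `n+1` tensor factors
(position `i ↦ i+1 mod n+1`) yields `σ ⊗ ω'`. -/
theorem cyclic_permutation_catalysis {d n : ℕ} (hn : 2 ≤ n)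
    (ρ σ : Matrix (Fin d) (Fin d) ℂ) (hρ : IsDensity ρ) (hσ : IsDensity σ)
    (ω ω' : Matrix (Fin n → Fin d) (Fin n → Fin d) ℂ)
    (hω : ω = ((n : ℂ) - 1)⁻¹ • ∑ k ∈ Finset.Icc 1 (n - 1), tensorMix ρ σ n k)
    (hω' : ω' = ((n : ℂ) - 1)⁻¹ • ∑ k ∈ Finset.Icc 2 n, tensorMix ρ σ n k) :
    permUnitary (finRotate (n + 1)) * tensorHead ρ ω *
        (permUnitary (finRotate (n + 1)))ᴴ
      = tensorHead σ ω' := by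
  ext x y
  rw [conj_perm, hω, hω']
  set e := finRotate (n+1) with he
  set c := ((n : ℂ) - 1)⁻¹ with hc
  simp only [tensorHead, Matrix.smul_apply, Matrix.sum_apply, smul_eq_mul]
  have hmap : Finset.Icc 2 n =
      Finset.map (addRightEmbedding 1) (Finset.Icc 1 (n - 1)) := by
    rw [Finset.map_add_right_Icc]
    congr 1
    omega
  have hS : ρ (x (e 0)) (y (e 0)) *
        ∑ k ∈ Finset.Icc 1 (n-1),
          tensorMix ρ σ n k (fun i => x (e i.succ)) (fun i => y (e i.succ))
      = σ (x 0) (y 0) * ∑ k ∈ Finset.Icc 2 n,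
          tensorMix ρ σ n k (fun i => x i.succ) (fun i => y i.succ) := by
    rw [hmap, Finset.sum_map, Finset.mul_sum, Finset.mul_sum]
    refine Finset.sum_congr rfl fun k hk => ?_
    simp only [Finset.mem_Icc] at hk
    have := key ρ σ k hk.1 hk.2 hn x y
    simp only [tensorHead] at this
    simpa only [addRightEmbedding_apply, he] using this
  linear_combination c * hS
end

section
/- Schur–Horn (easy direction): for any Hermitian matrix H ∈ M_d(ℂ) and any unitary U ∈ M_d(ℂ), the vector of diagonal entries of U H U† is majorized by the vector of eigenvalues of H. -/
/-!
Write `H = V D V†` with `V` unitary and `D` the diagonal of eigenvalues `λ`. Then the diagonal of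
`U H U†` is `S λ` with `S i j = |(U V) i j|²`, which is doubly stochastic because `U V` is unitary.
For a doubly stochastic `S` and a set `s` of `k` rows, `∑ i ∈ s, (S λ) i = ∑ j, c j * λ j` with
column weights `c j = ∑ i ∈ s, S i j` in `[0, 1]` summing to `k`. Such a weighted sum is at most
the sum of the `k` largest `λ j`: pick a threshold `m` below the top `k` values and above the
others; removing weight from the top and adding the same mass below `m` can only lower the sum.
-/

open Matrix

open Finset

section TopSubsets

variable {ι : Type*} [Fintype ι]

theorem le_of_isMaxOn_sum_powersetCard [DecidableEq ι] {l : ι → ℝ} {k : ℕ} {t : Finset ι}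
    (htk : t.card = k)
    (hmax : ∀ s ∈ (univ : Finset ι).powersetCard k, ∑ j ∈ s, l j ≤ ∑ j ∈ t, l j)
    {i j : ι} (hi : i ∈ t) (hj : j ∉ t) : l j ≤ l i := by
  have hj' : j ∉ t.erase i := fun h => hj (mem_of_mem_erase h)
  have hcard : (insert j (t.erase i)).card = k := by
    rw [card_insert_of_notMem hj', card_erase_of_mem hi, htk]
    have : 0 < k := htk ▸ card_pos.mpr ⟨i, hi⟩
    omega
  have hle := hmax _ (mem_powersetCard.mpr ⟨subset_univ _, hcard⟩)
  rw [sum_insert hj', ← add_sum_erase t l hi] at hle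
  linarith

theorem exists_card_eq_separated_by_threshold (l : ι → ℝ) {k : ℕ} (hk : k ≤ Fintype.card ι) :
    ∃ t : Finset ι, t.card = k ∧ ∃ m, (∀ i ∈ t, m ≤ l i) ∧ ∀ j ∉ t, l j ≤ m := by
  classical
  rcases Nat.eq_zero_or_pos k with rfl | hkpos
  · obtain ⟨m, hm⟩ := (Set.finite_range l).bddAbove
    exact ⟨∅, card_empty, m, by simp, fun j _ => hm ⟨j, rfl⟩⟩
  obtain ⟨t, htmem, hmax⟩ := exists_max_image ((univ : Finset ι).powersetCard k)
    (fun s => ∑ j ∈ s, l j) (powersetCard_nonempty.mpr (by simpa using hk))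
  have htk : t.card = k := (mem_powersetCard.mp htmem).2
  have ht : t.Nonempty := card_pos.mp (htk ▸ hkpos)
  obtain ⟨i₀, hi₀, hm⟩ := exists_mem_eq_inf' ht l
  exact ⟨t, htk, t.inf' ht l, fun i hi => inf'_le l hi,
    fun j hj => hm ▸ le_of_isMaxOn_sum_powersetCard htk hmax hi₀ hj⟩

theorem sum_mul_le_sum_of_threshold {l c : ι → ℝ} (hc0 : ∀ j, 0 ≤ c j) (hc1 : ∀ j, c j ≤ 1)
    {t : Finset ι} (hsum : ∑ j, c j = t.card) {m : ℝ} (hin : ∀ i ∈ t, m ≤ l i)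
    (hout : ∀ j ∉ t, l j ≤ m) : ∑ j, c j * l j ≤ ∑ j ∈ t, l j := by
  classical
  have hmass : ∑ j ∈ t, (1 - c j) = ∑ j ∈ tᶜ, c j := by
    rw [sum_sub_distrib, sum_const, nsmul_eq_mul, mul_one]
    linarith [sum_compl_add_sum t c]
  have hloss : ∑ j ∈ t, (1 - c j) * m ≤ ∑ j ∈ t, (1 - c j) * l j :=
    sum_le_sum fun j hj => mul_le_mul_of_nonneg_left (hin j hj) (sub_nonneg.mpr (hc1 j))
  have hgain : ∑ j ∈ tᶜ, c j * l j ≤ ∑ j ∈ tᶜ, c j * m :=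
    sum_le_sum fun j hj => mul_le_mul_of_nonneg_left (hout j (mem_compl.mp hj)) (hc0 j)
  rw [← sum_mul, hmass] at hloss
  rw [← sum_mul] at hgain
  have hsplit :
      ∑ j, c j * l j = ∑ j ∈ t, l j - ∑ j ∈ t, (1 - c j) * l j + ∑ j ∈ tᶜ, c j * l j := by
    rw [← sum_add_sum_compl t]
    simp only [sub_mul, one_mul, sum_sub_distrib]
    ring
  linarith

theorem exists_card_eq_sum_mul_le_sum (l c : ι → ℝ) (hc0 : ∀ j, 0 ≤ c j) (hc1 : ∀ j, c j ≤ 1)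
    {k : ℕ} (hsum : ∑ j, c j = k) : ∃ t : Finset ι, t.card = k ∧ ∑ j, c j * l j ≤ ∑ j ∈ t, l j := by
  have hk : k ≤ Fintype.card ι := by
    have : (k : ℝ) ≤ Fintype.card ι := by
      simpa [hsum] using sum_le_sum fun j (_ : j ∈ univ) => hc1 j
    exact_mod_cast this
  obtain ⟨t, htk, m, hin, hout⟩ := exists_card_eq_separated_by_threshold l hk
  exact ⟨t, htk, sum_mul_le_sum_of_threshold hc0 hc1 (htk ▸ hsum) hin hout⟩

end TopSubsets

theorem majorizes_mulVec_of_mem_doublyStochastic {n : Type*} [Fintype n] [DecidableEq n]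
    {S : Matrix n n ℝ} (hS : S ∈ doublyStochastic ℝ n) (x : n → ℝ) : Majorizes x (S *ᵥ x) := by
  refine ⟨fun s => ?_, (sum_mulVec_of_mem_doublyStochastic hS).symm⟩
  have hc0 : ∀ j, 0 ≤ ∑ i ∈ s, S i j := fun j =>
    sum_nonneg fun i _ => nonneg_of_mem_doublyStochastic hS
  have hc1 : ∀ j, ∑ i ∈ s, S i j ≤ 1 := fun j =>
    sum_col_of_mem_doublyStochastic hS j ▸
      sum_le_sum_of_subset_of_nonneg (subset_univ s) fun i _ _ => nonneg_of_mem_doublyStochastic hS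
  have hsum : ∑ j, ∑ i ∈ s, S i j = s.card := by
    rw [sum_comm]
    simp [sum_row_of_mem_doublyStochastic hS]
  obtain ⟨t, hts, hle⟩ := exists_card_eq_sum_mul_le_sum x _ hc0 hc1 hsum
  refine ⟨t, hts, le_of_eq_of_le ?_ hle⟩
  simp only [mulVec, dotProduct, sum_mul]
  exact sum_comm

section Unistochastic

variable {𝕜 n : Type*} [RCLike 𝕜] [Fintype n] [DecidableEq n]

def entrywiseNormSq (W : Matrix n n 𝕜) : Matrix n n ℝ := of fun i j => ‖W i j‖ ^ 2

theorem entrywiseNormSq_mem_doublyStochastic {W : Matrix n n 𝕜} (hW : W ∈ unitaryGroup n 𝕜) :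
    entrywiseNormSq W ∈ doublyStochastic ℝ n := by
  have hrow (i : n) : ∑ j, ‖W i j‖ ^ 2 = 1 := by
    have h := congr_fun₂ (mem_unitaryGroup_iff.mp hW) i i
    simp only [mul_apply, star_apply, RCLike.star_def, RCLike.mul_conj, one_apply_eq] at h
    exact_mod_cast h
  have hcol (j : n) : ∑ i, ‖W i j‖ ^ 2 = 1 := by
    have h := congr_fun₂ (mem_unitaryGroup_iff'.mp hW) j j
    simp only [mul_apply, star_apply, RCLike.star_def, RCLike.conj_mul, one_apply_eq] at h
    exact_mod_cast h
  exact mem_doublyStochastic_iff_sum.mpr ⟨fun _ _ => sq_nonneg _, hrow, hcol⟩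

theorem diag_mul_diagonal_mul_star (W : Matrix n n 𝕜) (x : n → ℝ) (i : n) :
    (W * diagonal (RCLike.ofReal ∘ x) * star W : Matrix n n 𝕜) i i =
      ((entrywiseNormSq W *ᵥ x) i : 𝕜) := by
  rw [mul_apply]
  simp only [mul_diagonal, star_apply, RCLike.star_def, mulVec, dotProduct, entrywiseNormSq,
    of_apply, Function.comp_apply]
  push_cast
  refine sum_congr rfl fun j _ => ?_
  rw [← RCLike.mul_conj]
  ring

end Unistochastic

/-- **Schur–Horn, easy direction.** The diagonal of `U H U†` is majorized by
the vector of eigenvalues of the Hermitian matrix `H`. -/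
theorem schur_horn_diag_majorized {d : ℕ} (H U : Matrix (Fin d) (Fin d) ℂ)
    (hH : H.IsHermitian) (hU : U ∈ Matrix.unitaryGroup (Fin d) ℂ) :
    Majorizes hH.eigenvalues (fun i => ((U * H * Uᴴ) i i).re) := by
  set W : unitaryGroup (Fin d) ℂ := ⟨U, hU⟩ * hH.eigenvectorUnitary
  have hconj :
      U * H * Uᴴ = Unitary.conjStarAlgAut ℂ _ W (diagonal (RCLike.ofReal ∘ hH.eigenvalues)) :=
    calc U * H * Uᴴ = Unitary.conjStarAlgAut ℂ _ ⟨U, hU⟩ H := rfl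
      _ = _ := by
        conv_lhs => rw [hH.spectral_theorem]
        rw [← Unitary.conjStarAlgAut_mul_apply]
  have hdiag : (fun i => ((U * H * Uᴴ) i i).re) =
      entrywiseNormSq (W : Matrix (Fin d) (Fin d) ℂ) *ᵥ hH.eigenvalues := by
    funext i
    rw [hconj, Unitary.conjStarAlgAut_apply, diag_mul_diagonal_mul_star]
    exact RCLike.ofReal_re (K := ℂ) _
  rw [hdiag]
  exact majorizes_mulVec_of_mem_doublyStochastic (entrywiseNormSq_mem_doublyStochastic W.2) _
end
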